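/- arXiv:2204.03377 — 8 statements merged into one kernel-verified Lean document; each statement's English description precedes it below -/
import Mathlib

section
/- Let S be a semigroup with finite R-height and let B be a bi-ideal of S. If H_R(B) ≥ n, then there exists a chain b_1 <_B b_2 <_B ... <_B b_n of elements of B with b_1 ∈ K(S), where K(S) is the kernel of S. -/
/-!
Common definitions: Green's preorder/relation computed inside a subsemigroup,
chains of R-classes, R-height, bi-ideals, one- and two-sided ideals,
the kernel, and completely simple (sub)semigroups.
-/

variable {S : Type*}

/-- Green's preorder `≤_B` computed with multipliers from `B`:
`a ≤_B b` iff `a ∈ bB¹`, i.e. `a = b` or `a = b*s` for some `s ∈ B`. -/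
def RLe [Semigroup S] (B : Set S) (a b : S) : Prop :=
  a = b ∨ ∃ s ∈ B, a = b * s

/-- The strict version `<_B` of Green's preorder. -/
def RLt [Semigroup S] (B : Set S) (a b : S) : Prop :=
  RLe B a b ∧ ¬ RLe B b a

/-- Green's relation `R` computed with multipliers from `B`. -/
def REquiv [Semigroup S] (B : Set S) (a b : S) : Prop :=
  RLe B a b ∧ RLe B b a

/-- There is a chain of `n` (distinct, linearly ordered) `R`-classes of the
subsemigroup `B`, with all representatives lying in `C`. -/
def HasRChain [Semigroup S] (B C : Set S) (n : ℕ) : Prop :=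
  ∃ f : Fin n → S, (∀ i, f i ∈ C) ∧ ∀ i j : Fin n, i < j → RLt B (f i) (f j)

/-- There is a chain of `n` `R`-classes of `S`, each of which is contained in `C`. -/
def HasRChainInside [Semigroup S] (C : Set S) (n : ℕ) : Prop :=
  ∃ f : Fin n → S, (∀ i, ∀ x : S, REquiv Set.univ x (f i) → x ∈ C) ∧
    ∀ i j : Fin n, i < j → RLt (Set.univ : Set S) (f i) (f j)

/-- The `R`-height of the subsemigroup `B`: the supremum of the lengths
(cardinalities) of chains of `R_B`-classes. -/
noncomputable def RHeight [Semigroup S] (B : Set S) : ℕ∞ :=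
  sSup ((fun n : ℕ => (n : ℕ∞)) '' {n : ℕ | HasRChain B B n})

/-- A bi-ideal of `S`: a nonempty subset `B` with `BS¹B ⊆ B`. -/
def IsBiIdeal [Semigroup S] (B : Set S) : Prop :=
  B.Nonempty ∧ ∀ b ∈ B, ∀ c ∈ B, b * c ∈ B ∧ ∀ s : S, b * s * c ∈ B

/-- A right ideal of `S`: a nonempty subset `A` with `AS ⊆ A`. -/
def IsRightIdeal [Semigroup S] (A : Set S) : Prop :=
  A.Nonempty ∧ ∀ a ∈ A, ∀ s : S, a * s ∈ A

/-- A left ideal of `S`: a nonempty subset `A` with `SA ⊆ A`. -/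
def IsLeftIdeal [Semigroup S] (A : Set S) : Prop :=
  A.Nonempty ∧ ∀ a ∈ A, ∀ s : S, s * a ∈ A

/-- A two-sided ideal of `S`. -/
def IsTwoSidedIdealSet [Semigroup S] (A : Set S) : Prop :=
  IsRightIdeal A ∧ IsLeftIdeal A

/-- `K` is the kernel (minimum two-sided ideal) of `S`. -/
def IsKernel [Semigroup S] (K : Set S) : Prop :=
  IsTwoSidedIdealSet K ∧ ∀ A : Set S, IsTwoSidedIdealSet A → K ⊆ A

/-- A right ideal of the subsemigroup `K` of `S`. -/
def IsRightIdealIn [Semigroup S] (K A : Set S) : Prop :=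
  A.Nonempty ∧ A ⊆ K ∧ ∀ a ∈ A, ∀ k ∈ K, a * k ∈ A

/-- A left ideal of the subsemigroup `K` of `S`. -/
def IsLeftIdealIn [Semigroup S] (K A : Set S) : Prop :=
  A.Nonempty ∧ A ⊆ K ∧ ∀ a ∈ A, ∀ k ∈ K, k * a ∈ A

/-- A two-sided ideal of the subsemigroup `K` of `S`. -/
def IsIdealIn [Semigroup S] (K A : Set S) : Prop :=
  IsRightIdealIn K A ∧ IsLeftIdealIn K A

/-- The subsemigroup `K` of `S` is completely simple: it is simple (has no
proper two-sided ideals) and possesses both a minimal right ideal and a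
minimal left ideal. -/
def IsCompletelySimple [Semigroup S] (K : Set S) : Prop :=
  K.Nonempty ∧ (∀ a ∈ K, ∀ b ∈ K, a * b ∈ K) ∧
  (∀ A : Set S, IsIdealIn K A → A = K) ∧
  (∃ A : Set S, IsRightIdealIn K A ∧ ∀ A' : Set S, IsRightIdealIn K A' → A' ⊆ A → A' = A) ∧
  (∃ A : Set S, IsLeftIdealIn K A ∧ ∀ A' : Set S, IsLeftIdealIn K A' → A' ⊆ A → A' = A)

lemma rle_trans' {S : Type*} [Semigroup S] {B : Set S}
    (hmul : ∀ a ∈ B, ∀ b ∈ B, a * b ∈ B) {a b c : S}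
    (hab : RLe B a b) (hbc : RLe B b c) : RLe B a c := by
  rcases hab with rfl | ⟨s, hs, rfl⟩
  · exact hbc
  · rcases hbc with rfl | ⟨t, ht, rfl⟩
    · exact Or.inr ⟨s, hs, rfl⟩
    · exact Or.inr ⟨t * s, hmul t ht s hs, mul_assoc _ _ _⟩

lemma hasRChain_mono' {S : Type*} [Semigroup S] {B C : Set S} {m n : ℕ}
    (h : n ≤ m) (hm : HasRChain B C m) : HasRChain B C n := by
  obtain ⟨f, hf, hlt⟩ := hm
  exact ⟨fun i => f (Fin.castLE h i), fun i => hf _,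
    fun i j hij => hlt _ _ hij⟩

/-- If `S` has finite `R`-height, `B` is a bi-ideal of `S` and
`H_R(B) ≥ n`, then there is a chain `b₁ <_B b₂ <_B ⋯ <_B bₙ` in `B` with `b₁ ∈ K(S)`. -/
theorem biideal_chain_starting_in_kernel {S : Type*} [Semigroup S]
    (hfin : RHeight (Set.univ : Set S) ≠ ⊤)
    {B : Set S} (hB : IsBiIdeal B) {K : Set S} (hK : IsKernel K)
    (n : ℕ) (hn : (n : ℕ∞) ≤ RHeight B) :
    ∃ f : Fin n → S, (∀ i, f i ∈ B) ∧
      (∀ i j : Fin n, i < j → RLt B (f i) (f j)) ∧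
      (∀ i : Fin n, (i : ℕ) = 0 → f i ∈ K) := by
  have hmul : ∀ a ∈ B, ∀ b ∈ B, a * b ∈ B := fun a ha b hb => (hB.2 a ha b hb).1
  -- extract a chain of length n
  have hchain : HasRChain B B n := by
    by_contra hcon
    have hn0 : n ≠ 0 := by
      rintro rfl
      exact hcon ⟨Fin.elim0, fun i => i.elim0, fun i => i.elim0⟩
    have hle : RHeight B ≤ ((n - 1 : ℕ) : ℕ∞) := by
      apply sSup_le
      rintro x ⟨m, hm, rfl⟩
      have hmn : m < n := by
        by_contra h
        exact hcon (hasRChain_mono' (le_of_not_gt h) hm)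
      exact Nat.cast_le.mpr (Nat.le_pred_of_lt hmn)
    have := hn.trans hle
    have : n ≤ n - 1 := by exact_mod_cast this
    omega
  rcases Nat.eq_zero_or_pos n with rfl | hpos
  · exact ⟨Fin.elim0, fun i => i.elim0, fun i => i.elim0, fun i => i.elim0⟩
  obtain ⟨f, hfB, hflt⟩ := hchain
  obtain ⟨k, hk⟩ := hK.1.1.1
  set i0 : Fin n := ⟨0, hpos⟩ with hi0def
  set b₁ := f i0 with hb₁def
  have hb₁B : b₁ ∈ B := hfB i0
  set m : S := b₁ * k * b₁ with hmdef
  have hmB : m ∈ B := (hB.2 b₁ hb₁B b₁ hb₁B).2 k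
  have hb'B : b₁ * m ∈ B := by
    have := (hB.2 b₁ hb₁B b₁ hb₁B).2 (b₁ * k)
    simpa [hmdef, mul_assoc] using this
  have hb'K : b₁ * m ∈ K := by
    have h1 : k * b₁ ∈ K := hK.1.1.2 k hk b₁
    have h2 : b₁ * (k * b₁) ∈ K := hK.1.2.2 _ h1 b₁
    have h3 : b₁ * (b₁ * (k * b₁)) ∈ K := hK.1.2.2 _ h2 b₁
    simpa [hmdef, mul_assoc] using h3
  have hb'le : RLe B (b₁ * m) b₁ := Or.inr ⟨m, hmB, rfl⟩
  refine ⟨fun i => if (i : ℕ) = 0 then b₁ * m else f i, ?_, ?_, ?_⟩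
  · intro i
    by_cases h : (i : ℕ) = 0 <;> simp [h, hb'B, hfB i]
  · intro i j hij
    have hj : (j : ℕ) ≠ 0 := (Nat.lt_of_le_of_lt (Nat.zero_le _) hij).ne'
    by_cases hi : (i : ℕ) = 0
    · have hieq : i = i0 := Fin.ext hi
      have hlt0j : RLt B b₁ (f j) := hflt i0 j (hieq ▸ hij)
      simp only [hi, hj, if_true, if_false, if_pos, if_neg]
      constructor
      · exact rle_trans' hmul hb'le hlt0j.1
      · intro hcon
        exact hlt0j.2 (rle_trans' hmul hcon hb'le)
    · simp only [hi, hj, if_neg]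
      exact hflt i j hij
  · intro i hi
    simp [hi, hb'K]
end

section
/- Let S be a semigroup and let B be a bi-ideal of S. If b, c ∈ B each have a local right identity in B, then b ≤_B c if and only if b ≤_S c, and b <_B c if and only if b <_S c. -/
/-!
Common definitions: Green's preorder/relation computed inside a subsemigroup,
chains of R-classes, R-height, bi-ideals, one- and two-sided ideals,
the kernel, and completely simple (sub)semigroups.
-/

variable {S : Type*}

/-- If `b, c` in a bi-ideal `B` of `S` have local right identities in
`B`, then `b ≤_B c ↔ b ≤_S c` and `b <_B c ↔ b <_S c`. -/
theorem biideal_local_right_identity_le_iff {S : Type*} [Semigroup S]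
    {B : Set S} (hB : IsBiIdeal B) {b c : S} (hb : b ∈ B) (hc : c ∈ B)
    (hbl : ∃ u ∈ B, b = b * u) (hcl : ∃ v ∈ B, c = c * v) :
    (RLe B b c ↔ RLe (Set.univ : Set S) b c) ∧
    (RLt B b c ↔ RLt (Set.univ : Set S) b c) := by
  obtain ⟨u, hu, hbu⟩ := hbl
  obtain ⟨v, hv, hcv⟩ := hcl
  have key : ∀ x y : S, x ∈ B → y ∈ B → (∃ w ∈ B, x = x * w) → (∃ w ∈ B, y = y * w) →
      (RLe B x y ↔ RLe (Set.univ : Set S) x y) := by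
    intro x y hx hy ⟨w, hw, hxw⟩ ⟨z, hz, hyz⟩
    constructor
    · rintro (rfl | ⟨s, hs, rfl⟩)
      · exact Or.inl rfl
      · exact Or.inr ⟨s, Set.mem_univ s, rfl⟩
    · rintro (rfl | ⟨s, -, rfl⟩)
      · exact Or.inl rfl
      · right
        refine ⟨z * s * w, (hB.2 z hz w hw).2 s, ?_⟩
        calc y * s = y * s * w := by conv_lhs => rw [hxw]
          _ = y * z * s * w := by rw [← hyz]
          _ = y * (z * s * w) := by simp [mul_assoc]
  have h1 := key b c hb hc ⟨u, hu, hbu⟩ ⟨v, hv, hcv⟩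
  have h2 := key c b hc hb ⟨v, hv, hcv⟩ ⟨u, hu, hbu⟩
  exact ⟨h1, by unfold RLt; rw [h1, h2]⟩
end

section
/- Let S be a semigroup whose kernel K = K(S) exists and is completely simple, and let B be a bi-ideal of S. For any b, c ∈ B ∩ K, we have b ≤_B c if and only if b ≤_S c, and b <_B c if and only if b <_S c. -/
/-!
Common definitions: Green's preorder/relation computed inside a subsemigroup,
chains of R-classes, R-height, bi-ideals, one- and two-sided ideals,
the kernel, and completely simple (sub)semigroups.
-/

variable {S : Type*}

private lemma cover_right [Semigroup S] {K : Set S} (hCS : IsCompletelySimple K) :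
    ∀ x ∈ K, ∃ R : Set S, (IsRightIdealIn K R ∧
      ∀ A', IsRightIdealIn K A' → A' ⊆ R → A' = R) ∧ x ∈ R := by
  obtain ⟨hKne, hmul, hsimple, ⟨A, hA, hAmin⟩, -⟩ := hCS
  have htrans : ∀ a ∈ K, IsRightIdealIn K ((a * ·) '' A) ∧
      ∀ A', IsRightIdealIn K A' → A' ⊆ (a * ·) '' A → A' = (a * ·) '' A := by
    intro a ha
    obtain ⟨hAne, hAK, hAr⟩ := hA
    constructor
    · refine ⟨hAne.image _, ?_, ?_⟩
      · rintro y ⟨r, hr, rfl⟩; exact hmul a ha r (hAK hr)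
      · rintro y ⟨r, hr, rfl⟩ k hk
        exact ⟨r * k, hAr r hr k hk, (mul_assoc a r k).symm⟩
    · intro A' hA' hsub
      obtain ⟨hA'ne, hA'K, hA'r⟩ := hA'
      have hTeq : {r ∈ A | a * r ∈ A'} = A := by
        apply hAmin
        · refine ⟨?_, fun r hr => hAK hr.1, ?_⟩
          · obtain ⟨y, hy⟩ := hA'ne
            obtain ⟨r, hr, hry⟩ := hsub hy
            exact ⟨r, hr, by rw [show a * r = y from hry]; exact hy⟩
          · intro r hr k hk
            exact ⟨hAr r hr.1 k hk, by rw [← mul_assoc]; exact hA'r _ hr.2 k hk⟩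
        · exact fun r hr => hr.1
      apply Set.Subset.antisymm hsub
      rintro y ⟨r, hr, rfl⟩
      have : r ∈ {r ∈ A | a * r ∈ A'} := by rw [hTeq]; exact hr
      exact this.2
  intro x hx
  have hUK : A ∪ {y | ∃ a ∈ K, ∃ r ∈ A, y = a * r} = K := by
    apply hsimple
    obtain ⟨hAne, hAK, hAr⟩ := hA
    constructor
    · refine ⟨hAne.mono Set.subset_union_left, ?_, ?_⟩
      · rintro y (hy | ⟨a, ha, r, hr, rfl⟩)
        · exact hAK hy
        · exact hmul a ha r (hAK hr)
      · rintro y (hy | ⟨a, ha, r, hr, rfl⟩) k hk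
        · exact Or.inl (hAr y hy k hk)
        · exact Or.inr ⟨a, ha, r * k, hAr r hr k hk, mul_assoc a r k⟩
    · refine ⟨hAne.mono Set.subset_union_left, ?_, ?_⟩
      · rintro y (hy | ⟨a, ha, r, hr, rfl⟩)
        · exact hAK hy
        · exact hmul a ha r (hAK hr)
      · rintro y (hy | ⟨a, ha, r, hr, rfl⟩) k hk
        · exact Or.inr ⟨k, hk, y, hy, rfl⟩
        · exact Or.inr ⟨k * a, hmul k hk a ha, r, hr, (mul_assoc k a r).symm⟩
  have hxU : x ∈ A ∪ {y | ∃ a ∈ K, ∃ r ∈ A, y = a * r} := by rw [hUK]; exact hx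
  rcases hxU with hxA | ⟨a, ha, r, hr, rfl⟩
  · exact ⟨A, ⟨hA, hAmin⟩, hxA⟩
  · exact ⟨(a * ·) '' A, htrans a ha, ⟨r, hr, rfl⟩⟩

private lemma cover_left [Semigroup S] {K : Set S} (hCS : IsCompletelySimple K) :
    ∀ x ∈ K, ∃ R : Set S, (IsLeftIdealIn K R ∧
      ∀ A', IsLeftIdealIn K A' → A' ⊆ R → A' = R) ∧ x ∈ R := by
  obtain ⟨hKne, hmul, hsimple, -, ⟨A, hA, hAmin⟩⟩ := hCS
  have htrans : ∀ a ∈ K, IsLeftIdealIn K ((· * a) '' A) ∧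
      ∀ A', IsLeftIdealIn K A' → A' ⊆ (· * a) '' A → A' = (· * a) '' A := by
    intro a ha
    obtain ⟨hAne, hAK, hAr⟩ := hA
    constructor
    · refine ⟨hAne.image _, ?_, ?_⟩
      · rintro y ⟨r, hr, rfl⟩; exact hmul r (hAK hr) a ha
      · rintro y ⟨r, hr, rfl⟩ k hk
        exact ⟨k * r, hAr r hr k hk, mul_assoc k r a⟩
    · intro A' hA' hsub
      obtain ⟨hA'ne, hA'K, hA'r⟩ := hA'
      have hTeq : {r ∈ A | r * a ∈ A'} = A := by
        apply hAmin
        · refine ⟨?_, fun r hr => hAK hr.1, ?_⟩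
          · obtain ⟨y, hy⟩ := hA'ne
            obtain ⟨r, hr, hry⟩ := hsub hy
            exact ⟨r, hr, by rw [show r * a = y from hry]; exact hy⟩
          · intro r hr k hk
            exact ⟨hAr r hr.1 k hk, by rw [mul_assoc]; exact hA'r _ hr.2 k hk⟩
        · exact fun r hr => hr.1
      apply Set.Subset.antisymm hsub
      rintro y ⟨r, hr, rfl⟩
      have : r ∈ {r ∈ A | r * a ∈ A'} := by rw [hTeq]; exact hr
      exact this.2
  intro x hx
  have hUK : A ∪ {y | ∃ a ∈ K, ∃ r ∈ A, y = r * a} = K := by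
    apply hsimple
    obtain ⟨hAne, hAK, hAr⟩ := hA
    constructor
    · refine ⟨hAne.mono Set.subset_union_left, ?_, ?_⟩
      · rintro y (hy | ⟨a, ha, r, hr, rfl⟩)
        · exact hAK hy
        · exact hmul r (hAK hr) a ha
      · rintro y (hy | ⟨a, ha, r, hr, rfl⟩) k hk
        · exact Or.inr ⟨k, hk, y, hy, rfl⟩
        · exact Or.inr ⟨a * k, hmul a ha k hk, r, hr, mul_assoc r a k⟩
    · refine ⟨hAne.mono Set.subset_union_left, ?_, ?_⟩
      · rintro y (hy | ⟨a, ha, r, hr, rfl⟩)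
        · exact hAK hy
        · exact hmul r (hAK hr) a ha
      · rintro y (hy | ⟨a, ha, r, hr, rfl⟩) k hk
        · exact Or.inl (hAr y hy k hk)
        · exact Or.inr ⟨a, ha, k * r, hAr r hr k hk, (mul_assoc k r a).symm⟩
  have hxU : x ∈ A ∪ {y | ∃ a ∈ K, ∃ r ∈ A, y = r * a} := by rw [hUK]; exact hx
  rcases hxU with hxA | ⟨a, ha, r, hr, rfl⟩
  · exact ⟨A, ⟨hA, hAmin⟩, hxA⟩
  · exact ⟨(· * a) '' A, htrans a ha, ⟨r, hr, rfl⟩⟩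

private lemma right_sq [Semigroup S] {K : Set S} (hCS : IsCompletelySimple K) {x : S}
    (hx : x ∈ K) : ∃ w ∈ K, x = x * x * w := by
  obtain ⟨R, ⟨hR, hRmin⟩, hxR⟩ := cover_right hCS x hx
  obtain ⟨hKne, hmul, -, -, -⟩ := hCS
  obtain ⟨hRne, hRK, hRr⟩ := hR
  have hx2R : x * x ∈ R := hRr x hxR x hx
  have key : {y | ∃ k ∈ K, y = (x * x) * k} = R := by
    apply hRmin
    · refine ⟨?_, ?_, ?_⟩
      · obtain ⟨k, hk⟩ := hKne; exact ⟨_, k, hk, rfl⟩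
      · rintro y ⟨k, hk, rfl⟩; exact hRK (hRr _ hx2R k hk)
      · rintro y ⟨k, hk, rfl⟩ k' hk'
        exact ⟨k * k', hmul k hk k' hk', mul_assoc _ k k'⟩
    · rintro y ⟨k, hk, rfl⟩; exact hRr _ hx2R k hk
  have hxm : x ∈ {y | ∃ k ∈ K, y = (x * x) * k} := by rw [key]; exact hxR
  exact hxm

private lemma left_sq [Semigroup S] {K : Set S} (hCS : IsCompletelySimple K) {x : S}
    (hx : x ∈ K) : ∃ v ∈ K, x = v * (x * x) := by
  obtain ⟨R, ⟨hR, hRmin⟩, hxR⟩ := cover_left hCS x hx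
  obtain ⟨hKne, hmul, -, -, -⟩ := hCS
  obtain ⟨hRne, hRK, hRr⟩ := hR
  have hx2R : x * x ∈ R := hRr x hxR x hx
  have key : {y | ∃ k ∈ K, y = k * (x * x)} = R := by
    apply hRmin
    · refine ⟨?_, ?_, ?_⟩
      · obtain ⟨k, hk⟩ := hKne; exact ⟨_, k, hk, rfl⟩
      · rintro y ⟨k, hk, rfl⟩; exact hRK (hRr _ hx2R k hk)
      · rintro y ⟨k, hk, rfl⟩ k' hk'
        exact ⟨k' * k, hmul k' hk' k hk, (mul_assoc k' k _).symm⟩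
    · rintro y ⟨k, hk, rfl⟩; exact hRr _ hx2R k hk
  have hxm : x ∈ {y | ∃ k ∈ K, y = k * (x * x)} := by rw [key]; exact hxR
  exact hxm

private lemma reg_mem [Semigroup S] {K : Set S} (hCS : IsCompletelySimple K) {x : S}
    (hx : x ∈ K) : ∃ w ∈ K, x = x * w * x := by
  obtain ⟨w, hw, h1⟩ := right_sq hCS hx
  obtain ⟨v, hv, h2⟩ := left_sq hCS hx
  refine ⟨w, hw, ?_⟩
  have e1 : v * (x * x * w) = x * w := by
    calc v * (x * x * w) = (v * (x * x)) * w := by rw [← mul_assoc]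
      _ = x * w := by rw [← h2]
  have e2 : x * w * x = x := by
    calc x * w * x = v * (x * x * w) * x := by rw [e1]
      _ = v * ((x * x * w) * x) := mul_assoc v (x * x * w) x
      _ = v * (x * x) := by rw [← h1]
      _ = x := h2.symm
  exact e2.symm

private lemma key_le [Semigroup S] {K : Set S} (hCS : IsCompletelySimple K)
    {B : Set S} (hB : IsBiIdeal B) {b c : S} (hb : b ∈ B ∩ K) (hc : c ∈ B ∩ K) :
    RLe B b c ↔ RLe (Set.univ : Set S) b c := by
  constructor
  · rintro (rfl | ⟨s, -, hbs⟩)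
    · exact Or.inl rfl
    · exact Or.inr ⟨s, Set.mem_univ s, hbs⟩
  · rintro (rfl | ⟨s, -, hbs⟩)
    · exact Or.inl rfl
    · obtain ⟨w, hw, hreg⟩ := reg_mem hCS hb.2
      obtain ⟨w', hw', hsq⟩ := right_sq hCS hc.2
      have ht : c * (w' * (s * w)) * b ∈ B := (hB.2 c hc.1 b hb.1).2 (w' * (s * w))
      refine Or.inr ⟨c * (w' * (s * w)) * b, ht, ?_⟩
      have h3 : c * (c * (w' * (s * w)) * b) = c * (s * (w * b)) := by
        have hassoc : c * (c * (w' * (s * w)) * b) = (c * c * w') * (s * (w * b)) := by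
          simp only [mul_assoc]
        rw [hassoc, ← hsq]
      have h4 : c * (s * (w * b)) = b := by
        rw [← mul_assoc, ← hbs, ← mul_assoc, ← hreg]
      exact (h3.trans h4).symm

/-- If the kernel `K` of `S` is completely simple and `B` is a
bi-ideal of `S`, then for `b, c ∈ B ∩ K` we have `b ≤_B c ↔ b ≤_S c` and
`b <_B c ↔ b <_S c`. -/
theorem biideal_completely_simple_kernel_le_iff {S : Type*} [Semigroup S]
    {K : Set S} (hK : IsKernel K) (hCS : IsCompletelySimple K)
    {B : Set S} (hB : IsBiIdeal B) {b c : S} (hb : b ∈ B ∩ K) (hc : c ∈ B ∩ K) :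
    (RLe B b c ↔ RLe (Set.univ : Set S) b c) ∧
    (RLt B b c ↔ RLt (Set.univ : Set S) b c) := by
  have h1 := key_le hCS hB hb hc
  have h2 := key_le hCS hB hc hb
  refine ⟨h1, ?_⟩
  unfold RLt
  rw [h1, h2]
end

section
/- Let S be a semigroup with finite R-height and let B be a bi-ideal of S. Then H_R(B) ≤ 3n − 1, where n is the maximum length of a chain of R-classes of S that intersect B. -/
/-!
Common definitions: Green's preorder/relation computed inside a subsemigroup,
chains of R-classes, R-height, bi-ideals, one- and two-sided ideals,
the kernel, and completely simple (sub)semigroups.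
-/

variable {S : Type*}

section BiAux

variable [Semigroup S]

lemma rle_univ_of_rle {B : Set S} {a b : S} (h : RLe B a b) : RLe (Set.univ : Set S) a b := by
  rcases h with h | ⟨s, _, h⟩
  · exact Or.inl h
  · exact Or.inr ⟨s, trivial, h⟩

lemma rle_univ_trans {a b c : S} (h1 : RLe (Set.univ : Set S) a b)
    (h2 : RLe (Set.univ : Set S) b c) : RLe (Set.univ : Set S) a c := by
  rcases h1 with rfl | ⟨s, _, rfl⟩
  · exact h2
  · rcases h2 with rfl | ⟨t, _, rfl⟩
    · exact Or.inr ⟨s, trivial, rfl⟩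
    · exact Or.inr ⟨t * s, trivial, mul_assoc ..⟩

/-- Lemma L: a 4-chain whose top is S-below its bottom collapses. -/
lemma key4 {B : Set S} (hB : IsBiIdeal B) {x1 x2 x3 x4 p q r : S}
    (hp : p ∈ B) (hq : q ∈ B) (hr : r ∈ B)
    (e1 : x1 = x2 * p) (e2 : x2 = x3 * q) (e3 : x3 = x4 * r)
    (h4 : RLe (Set.univ : Set S) x4 x1) : RLe B x3 x2 := by
  rcases h4 with h4 | ⟨t, _, e4⟩
  · refine Or.inr ⟨p * r, (hB.2 p hp r hr).1, ?_⟩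
    rw [e3, h4, e1, mul_assoc]
  · have hptr : p * t * r ∈ B := (hB.2 p hp r hr).2 t
    refine Or.inr ⟨p * t * r * q * (p * t * r),
      ((hB.2 _ hptr q hq).1 |> fun h => (hB.2 _ h _ hptr).1), ?_⟩
    calc x3 = x4 * r := e3
      _ = x1 * t * r := by rw [e4]
      _ = x2 * p * t * r := by rw [e1]
      _ = x2 * (p * t * r) := by simp only [mul_assoc]
      _ = x3 * q * (p * t * r) := by rw [e2]
      _ = x4 * r * q * (p * t * r) := by rw [e3]
      _ = x1 * t * r * q * (p * t * r) := by rw [e4]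
      _ = x2 * p * t * r * q * (p * t * r) := by rw [e1]
      _ = x2 * (p * t * r * q * (p * t * r)) := by simp only [mul_assoc]

/-- Lemma M: a 3-chain in one `R_S`-class yields an element of `B`
strictly `R_S`-below its bottom. -/
lemma key3 {B : Set S} (hB : IsBiIdeal B) {x1 x2 x3 p q : S}
    (hx1 : x1 ∈ B) (hp : p ∈ B) (hq : q ∈ B)
    (e1 : x1 = x2 * p) (e2 : x2 = x3 * q)
    (h3 : RLe (Set.univ : Set S) x3 x1)
    (hn21 : ¬ RLe B x2 x1) (hn32 : ¬ RLe B x3 x2) :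
    ∃ b ∈ B, RLt (Set.univ : Set S) b x1 := by
  rcases h3 with h3 | ⟨u, _, e3⟩
  · exact absurd (Or.inr ⟨p, hp, by rw [h3, e1]⟩) hn32
  refine ⟨x1 * p, (hB.2 x1 hx1 p hp).1, Or.inr ⟨p, trivial, rfl⟩, ?_⟩
  rintro (h | ⟨t, _, h⟩)
  · refine hn21 (Or.inr ⟨p * u * q, (hB.2 p hp q hq).2 u, ?_⟩)
    calc x2 = x3 * q := e2
      _ = x1 * u * q := by rw [e3]
      _ = x1 * p * u * q := by rw [← h]
      _ = x1 * (p * u * q) := by simp only [mul_assoc]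
  · refine hn21 (Or.inr ⟨p * (t * u) * q, (hB.2 p hp q hq).2 (t * u), ?_⟩)
    calc x2 = x3 * q := e2
      _ = x1 * u * q := by rw [e3]
      _ = x1 * p * t * u * q := by
          conv_lhs => rw [h]
      _ = x1 * (p * (t * u) * q) := by simp only [mul_assoc]

/-- Bounding every `R_B`-chain length. -/
lemma chain_bound {B : Set S} (hB : IsBiIdeal B) {n : ℕ}
    (hmax : ∀ m : ℕ, HasRChain (Set.univ : Set S) B m → m ≤ n)
    (m : ℕ) (hm : HasRChain B B m) : m ≤ 3 * n - 1 := by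
  -- n ≥ 1
  obtain ⟨b0, hb0⟩ := hB.1
  have hn1 : 1 ≤ n := by
    refine hmax 1 ⟨fun _ => b0, fun _ => hb0, fun i j hij => ?_⟩
    exfalso
    have h1 := j.isLt
    have h2 : i.val < j.val := hij
    omega
  by_contra hcon
  have hm3 : 3 * n ≤ m := by omega
  have hm0 : 0 < m := by omega
  obtain ⟨f, hfB, hfc⟩ := hm
  set F : ℕ → S := fun k => f ⟨k % m, Nat.mod_lt k hm0⟩ with hF
  have hFB : ∀ k, F k ∈ B := fun k => hfB _
  have hFlt : ∀ i j : ℕ, i < j → j < m → RLt B (F i) (F j) := by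
    intro i j hij hjm
    have e1 : (⟨i % m, Nat.mod_lt i hm0⟩ : Fin m) = ⟨i, by omega⟩ :=
      Fin.ext (Nat.mod_eq_of_lt (by omega))
    have e2 : (⟨j % m, Nat.mod_lt j hm0⟩ : Fin m) = ⟨j, by omega⟩ :=
      Fin.ext (Nat.mod_eq_of_lt (by omega))
    show RLt B (f _) (f _)
    rw [e1, e2]
    exact hfc _ _ hij
  have hstep : ∀ i j : ℕ, i < j → j < m → ∃ s ∈ B, F i = F j * s := by
    intro i j hij hjm
    obtain ⟨h1, h2⟩ := hFlt i j hij hjm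
    rcases h1 with h1 | h1
    · exact absurd (Or.inl h1.symm) h2
    · exact h1
  have hFle : ∀ i j : ℕ, i ≤ j → j < m → RLe (Set.univ : Set S) (F i) (F j) := by
    intro i j hij hjm
    rcases eq_or_lt_of_le hij with rfl | hij
    · exact Or.inl rfl
    · exact rle_univ_of_rle (hFlt i j hij hjm).1
  -- Lemma L applied along the chain
  have hA : ∀ i j : ℕ, i + 3 ≤ j → j < m → ¬ RLe (Set.univ : Set S) (F j) (F i) := by
    intro i j hij hjm hle
    obtain ⟨p, hp, e1⟩ := hstep i (i + 1) (by omega) (by omega)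
    obtain ⟨q, hq, e2⟩ := hstep (i + 1) (i + 2) (by omega) (by omega)
    obtain ⟨r, hr, e3⟩ := hstep (i + 2) j (by omega) hjm
    exact (hFlt (i + 1) (i + 2) (by omega) (by omega)).2 (key4 hB hp hq hr e1 e2 e3 hle)
  -- build an S-chain of length n+1 with representatives in B
  have hgoal : HasRChain (Set.univ : Set S) B (n + 1) := by
    by_cases hc : RLe (Set.univ : Set S) (F 2) (F 0)
    · -- three elements in one R_S-class at the bottom: use key3
      obtain ⟨p, hp, e1⟩ := hstep 0 1 (by omega) (by omega)
      obtain ⟨q, hq, e2⟩ := hstep 1 2 (by omega) (by omega)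
      obtain ⟨b, hbB, hblt⟩ := key3 hB (hFB 0) hp hq e1 e2 hc
        (hFlt 0 1 (by omega) (by omega)).2 (hFlt 1 2 (by omega) (by omega)).2
      refine ⟨fun i => if i.val = 0 then b else F (3 * i.val - 1), fun i => ?_, ?_⟩
      · dsimp only; split
        · exact hbB
        · exact hFB _
      · intro i j hij
        have hij' : i.val < j.val := hij
        have hjn : j.val ≤ n := by omega
        have hjm : 3 * j.val - 1 < m := by omega
        by_cases hi0 : i.val = 0
        · have hj0 : j.val ≠ 0 := by omega
          simp only [hi0, if_pos rfl, if_neg hj0]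
          constructor
          · exact rle_univ_trans hblt.1 (hFle 0 (3 * j.val - 1) (by omega) hjm)
          · intro h
            exact hblt.2 (rle_univ_trans (hFle 0 (3 * j.val - 1) (by omega) hjm) h)
        · have hj0 : j.val ≠ 0 := by omega
          simp only [if_neg hi0, if_neg hj0]
          constructor
          · exact hFle _ _ (by omega) hjm
          · exact hA (3 * i.val - 1) (3 * j.val - 1) (by omega) hjm
    · refine ⟨fun i => if i.val = 0 then F 0 else F (3 * i.val - 1), fun i => ?_, ?_⟩
      · dsimp only; split
        · exact hFB 0
        · exact hFB _
      · intro i j hij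
        have hij' : i.val < j.val := hij
        have hjn : j.val ≤ n := by omega
        have hjm : 3 * j.val - 1 < m := by omega
        by_cases hi0 : i.val = 0
        · have hj0 : j.val ≠ 0 := by omega
          simp only [hi0, if_pos rfl, if_neg hj0]
          refine ⟨hFle 0 (3 * j.val - 1) (by omega) hjm, ?_⟩
          intro h
          rcases Nat.lt_or_ge j.val 2 with hj2 | hj2
          · have : j.val = 1 := by omega
            rw [this] at h
            exact hc (by simpa using h)
          · exact hA 0 (3 * j.val - 1) (by omega) hjm h
        · have hj0 : j.val ≠ 0 := by omega
          simp only [if_neg hi0, if_neg hj0]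
          constructor
          · exact hFle _ _ (by omega) hjm
          · exact hA (3 * i.val - 1) (3 * j.val - 1) (by omega) hjm
  have := hmax (n + 1) hgoal
  omega

end BiAux

/-- If `S` has finite `R`-height and `B` is a bi-ideal of `S`, then
`H_R(B) ≤ 3n - 1`, where `n` is the maximum length of a chain of `R_S`-classes
that intersect `B`. -/
theorem biideal_rheight_le {S : Type*} [Semigroup S]
    (hfin : RHeight (Set.univ : Set S) ≠ ⊤)
    {B : Set S} (hB : IsBiIdeal B) (n : ℕ)
    (hchain : HasRChain (Set.univ : Set S) B n)
    (hmax : ∀ m : ℕ, HasRChain (Set.univ : Set S) B m → m ≤ n) :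
    RHeight B ≤ ((3 * n - 1 : ℕ) : ℕ∞) := by
  apply sSup_le
  rintro x ⟨m, hm, rfl⟩
  show (m : ℕ∞) ≤ ((3 * n - 1 : ℕ) : ℕ∞)
  exact_mod_cast chain_bound hB hmax m hm
end

section
/- Let S be a semigroup with finite R-height whose kernel is completely simple, and let B be a bi-ideal of S. Then H_R(B) ≤ 3·H_R(S) − 2. -/
/-!
Common definitions: Green's preorder/relation computed inside a subsemigroup,
chains of R-classes, R-height, bi-ideals, one- and two-sided ideals,
the kernel, and completely simple (sub)semigroups.
-/

variable {S : Type*}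

namespace BiIdealRHeightAux

variable {S : Type*} [Semigroup S]

/-- The right ideal of `K` generated by `c ∈ K`, i.e. `cK`. -/
def rSet (K : Set S) (c : S) : Set S := {x | ∃ k ∈ K, x = c * k}

/-- The left ideal of `K` generated by `c ∈ K`, i.e. `Kc`. -/
def lSet (K : Set S) (c : S) : Set S := {x | ∃ k ∈ K, x = k * c}

def MinRight (K A : Set S) : Prop :=
  IsRightIdealIn K A ∧ ∀ A' : Set S, IsRightIdealIn K A' → A' ⊆ A → A' = A

def MinLeft (K A : Set S) : Prop :=
  IsLeftIdealIn K A ∧ ∀ A' : Set S, IsLeftIdealIn K A' → A' ⊆ A → A' = A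

theorem RLe_univ_trans {a b c : S}
    (h1 : RLe Set.univ a b) (h2 : RLe Set.univ b c) : RLe Set.univ a c := by
  rcases h1 with rfl | ⟨s, -, rfl⟩
  · exact h2
  · rcases h2 with rfl | ⟨t, -, rfl⟩
    · exact Or.inr ⟨s, trivial, rfl⟩
    · exact Or.inr ⟨t * s, trivial, mul_assoc c t s⟩

theorem rSet_isRightIdeal {K : Set S} (hne : K.Nonempty)
    (hmul : ∀ a ∈ K, ∀ b ∈ K, a * b ∈ K) {c : S} (hc : c ∈ K) :
    IsRightIdealIn K (rSet K c) := by
  obtain ⟨k₀, hk₀⟩ := hne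
  refine ⟨⟨c * k₀, k₀, hk₀, rfl⟩, ?_, ?_⟩
  · rintro x ⟨k, hk, rfl⟩
    exact hmul c hc k hk
  · rintro x ⟨k, hk, rfl⟩ k' hk'
    exact ⟨k * k', hmul k hk k' hk', mul_assoc c k k'⟩

theorem lSet_isLeftIdeal {K : Set S} (hne : K.Nonempty)
    (hmul : ∀ a ∈ K, ∀ b ∈ K, a * b ∈ K) {c : S} (hc : c ∈ K) :
    IsLeftIdealIn K (lSet K c) := by
  obtain ⟨k₀, hk₀⟩ := hne
  refine ⟨⟨k₀ * c, k₀, hk₀, rfl⟩, ?_, ?_⟩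
  · rintro x ⟨k, hk, rfl⟩
    exact hmul k hk c hc
  · rintro x ⟨k, hk, rfl⟩ k' hk'
    exact ⟨k' * k, hmul k' hk' k hk, (mul_assoc k' k c).symm⟩

theorem smul_minRight {K : Set S}
    (hmul : ∀ a ∈ K, ∀ b ∈ K, a * b ∈ K) {s : S} (hs : s ∈ K) {R : Set S}
    (hR : MinRight K R) : MinRight K {x | ∃ r ∈ R, x = s * r} := by
  obtain ⟨⟨⟨r₀, hr₀⟩, hRK, hRcl⟩, hRmin⟩ := hR
  refine ⟨⟨⟨s * r₀, r₀, hr₀, rfl⟩, ?_, ?_⟩, ?_⟩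
  · rintro x ⟨r, hr, rfl⟩
    exact hmul s hs r (hRK hr)
  · rintro x ⟨r, hr, rfl⟩ k hk
    exact ⟨r * k, hRcl r hr k hk, mul_assoc s r k⟩
  · rintro A' ⟨⟨a₀, ha₀⟩, hA'K, hA'cl⟩ hsub
    have hT : IsRightIdealIn K {x ∈ R | s * x ∈ A'} := by
      obtain ⟨r₁, hr₁, rfl⟩ := hsub ha₀
      refine ⟨⟨r₁, hr₁, ha₀⟩, fun x hx => hRK hx.1, ?_⟩
      rintro x ⟨hxR, hxA⟩ k hk
      exact ⟨hRcl x hxR k hk, by rw [← mul_assoc]; exact hA'cl _ hxA k hk⟩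
    have hTR : {x ∈ R | s * x ∈ A'} = R :=
      hRmin _ hT (fun x hx => hx.1)
    apply Set.Subset.antisymm hsub
    rintro x ⟨r, hr, rfl⟩
    have : r ∈ {x ∈ R | s * x ∈ A'} := by rw [hTR]; exact hr
    exact this.2

theorem smul_minLeft {K : Set S}
    (hmul : ∀ a ∈ K, ∀ b ∈ K, a * b ∈ K) {s : S} (hs : s ∈ K) {L : Set S}
    (hL : MinLeft K L) : MinLeft K {x | ∃ r ∈ L, x = r * s} := by
  obtain ⟨⟨⟨r₀, hr₀⟩, hLK, hLcl⟩, hLmin⟩ := hL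
  refine ⟨⟨⟨r₀ * s, r₀, hr₀, rfl⟩, ?_, ?_⟩, ?_⟩
  · rintro x ⟨r, hr, rfl⟩
    exact hmul r (hLK hr) s hs
  · rintro x ⟨r, hr, rfl⟩ k hk
    exact ⟨k * r, hLcl r hr k hk, (mul_assoc k r s).symm⟩
  · rintro A' ⟨⟨a₀, ha₀⟩, hA'K, hA'cl⟩ hsub
    have hT : IsLeftIdealIn K {x ∈ L | x * s ∈ A'} := by
      obtain ⟨r₁, hr₁, rfl⟩ := hsub ha₀
      refine ⟨⟨r₁, hr₁, ha₀⟩, fun x hx => hLK hx.1, ?_⟩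
      rintro x ⟨hxL, hxA⟩ k hk
      exact ⟨hLcl x hxL k hk, by rw [mul_assoc]; exact hA'cl _ hxA k hk⟩
    have hTL : {x ∈ L | x * s ∈ A'} = L :=
      hLmin _ hT (fun x hx => hx.1)
    apply Set.Subset.antisymm hsub
    rintro x ⟨r, hr, rfl⟩
    have : r ∈ {x ∈ L | x * s ∈ A'} := by rw [hTL]; exact hr
    exact this.2

end BiIdealRHeightAux
namespace BiIdealRHeightAux

variable {S : Type*} [Semigroup S]

theorem exists_minRight_mem {K : Set S} (hCS : IsCompletelySimple K)
    {b : S} (hb : b ∈ K) : ∃ R : Set S, MinRight K R ∧ b ∈ R := by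
  obtain ⟨hne, hmul, hsimp, ⟨R₀, hR₀, hR₀m⟩, -⟩ := hCS
  set U : Set S := {x | ∃ R : Set S, MinRight K R ∧ x ∈ R} with hU
  have hUK : U ⊆ K := by
    rintro x ⟨R, hRm, hxR⟩
    exact hRm.1.2.1 hxR
  have hUne : U.Nonempty := by
    obtain ⟨r₀, hr₀⟩ := hR₀.1
    exact ⟨r₀, R₀, ⟨hR₀, hR₀m⟩, hr₀⟩
  have hUideal : IsIdealIn K U := by
    refine ⟨⟨hUne, hUK, ?_⟩, ⟨hUne, hUK, ?_⟩⟩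
    · rintro x ⟨R, hRm, hxR⟩ k hk
      exact ⟨R, hRm, hRm.1.2.2 x hxR k hk⟩
    · rintro x ⟨R, hRm, hxR⟩ k hk
      exact ⟨_, smul_minRight hmul hk hRm, x, hxR, rfl⟩
  have hUeq : U = K := hsimp U hUideal
  rw [← hUeq] at hb
  exact hb

theorem exists_minLeft_mem {K : Set S} (hCS : IsCompletelySimple K)
    {b : S} (hb : b ∈ K) : ∃ L : Set S, MinLeft K L ∧ b ∈ L := by
  obtain ⟨hne, hmul, hsimp, -, ⟨L₀, hL₀, hL₀m⟩⟩ := hCS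
  set U : Set S := {x | ∃ L : Set S, MinLeft K L ∧ x ∈ L} with hU
  have hUK : U ⊆ K := by
    rintro x ⟨L, hLm, hxL⟩
    exact hLm.1.2.1 hxL
  have hUne : U.Nonempty := by
    obtain ⟨l₀, hl₀⟩ := hL₀.1
    exact ⟨l₀, L₀, ⟨hL₀, hL₀m⟩, hl₀⟩
  have hUideal : IsIdealIn K U := by
    refine ⟨⟨hUne, hUK, ?_⟩, ⟨hUne, hUK, ?_⟩⟩
    · rintro x ⟨L, hLm, hxL⟩ k hk
      exact ⟨_, smul_minLeft hmul hk hLm, x, hxL, rfl⟩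
    · rintro x ⟨L, hLm, hxL⟩ k hk
      exact ⟨L, hLm, hLm.1.2.2 x hxL k hk⟩
  have hUeq : U = K := hsimp U hUideal
  rw [← hUeq] at hb
  exact hb

theorem rSet_minRight {K : Set S} (hCS : IsCompletelySimple K)
    {b : S} (hb : b ∈ K) : MinRight K (rSet K b) ∧ b ∈ rSet K b := by
  obtain ⟨R, hRm, hbR⟩ := exists_minRight_mem hCS hb
  have hsub : rSet K b ⊆ R := by
    rintro x ⟨k, hk, rfl⟩
    exact hRm.1.2.2 b hbR k hk
  have heq : rSet K b = R :=
    hRm.2 _ (rSet_isRightIdeal hCS.1 hCS.2.1 hb) hsub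
  constructor
  · rw [heq]; exact hRm
  · rw [heq]; exact hbR

theorem lSet_minLeft {K : Set S} (hCS : IsCompletelySimple K)
    {b : S} (hb : b ∈ K) : MinLeft K (lSet K b) ∧ b ∈ lSet K b := by
  obtain ⟨L, hLm, hbL⟩ := exists_minLeft_mem hCS hb
  have hsub : lSet K b ⊆ L := by
    rintro x ⟨k, hk, rfl⟩
    exact hLm.1.2.2 b hbL k hk
  have heq : lSet K b = L :=
    hLm.2 _ (lSet_isLeftIdeal hCS.1 hCS.2.1 hb) hsub
  constructor
  · rw [heq]; exact hLm
  · rw [heq]; exact hbL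

/-- If `a, b ∈ K` and `a = b*s` for some `s ∈ S`, then `a ∈ bK`. -/
theorem mem_rSet_of {K : Set S} (hK : IsKernel K) (hCS : IsCompletelySimple K)
    {a b : S} (ha : a ∈ K) (hb : b ∈ K) {s : S} (h : a = b * s) :
    a ∈ rSet K b := by
  obtain ⟨-, k₁, hk₁, hbk⟩ := rSet_minRight hCS hb
  refine ⟨k₁ * s, hK.1.1.2 k₁ hk₁ s, ?_⟩
  rw [h]
  conv_lhs => rw [hbk]
  rw [mul_assoc]

theorem rSet_eq {K : Set S} (hCS : IsCompletelySimple K)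
    {a b : S} (hb : b ∈ K) (ha : a ∈ K) (h : a ∈ rSet K b) :
    rSet K a = rSet K b := by
  have hmul := hCS.2.1
  have hsub : rSet K a ⊆ rSet K b := by
    rintro x ⟨k, hk, rfl⟩
    obtain ⟨k', hk', hk'e⟩ := h
    exact ⟨k' * k, hmul k' hk' k hk, by rw [hk'e, mul_assoc]⟩
  exact (rSet_minRight hCS hb).1.2 _ (rSet_isRightIdeal hCS.1 hCS.2.1 ha) hsub

end BiIdealRHeightAux
namespace BiIdealRHeightAux

variable {S : Type*} [Semigroup S]

/-- Every element of a completely simple subsemigroup is regular. -/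
theorem regular_of_mem {K : Set S} (hCS : IsCompletelySimple K)
    {b : S} (hb : b ∈ K) : ∃ z ∈ K, b = b * z * b := by
  obtain ⟨k₀, hk₀⟩ := hCS.1
  have hmul := hCS.2.1
  obtain ⟨hRbmin, hbRb⟩ := rSet_minRight hCS hb
  obtain ⟨hLbmin, hbLb⟩ := lSet_minLeft hCS hb
  -- the element a = b*k₀*b
  have haR : b * k₀ * b ∈ rSet K b := ⟨k₀ * b, hmul _ hk₀ _ hb, mul_assoc b k₀ b⟩
  have haL : b * k₀ * b ∈ lSet K b := ⟨b * k₀, hmul _ hb _ hk₀, rfl⟩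
  -- x ∈ Rb implies x ∈ a • Rb
  have haG : ∀ x ∈ rSet K b, ∃ r ∈ rSet K b, x = (b * k₀ * b) * r := by
    intro x hx
    have hA' : IsRightIdealIn K {y | ∃ r ∈ rSet K b, y = (b * k₀ * b) * r} := by
      refine ⟨⟨(b * k₀ * b) * b, b, hbRb, rfl⟩, ?_, ?_⟩
      · rintro y ⟨r, hr, rfl⟩
        exact hmul _ (hRbmin.1.2.1 haR) _ (hRbmin.1.2.1 hr)
      · rintro y ⟨r, hr, rfl⟩ k hk
        exact ⟨r * k, hRbmin.1.2.2 r hr k hk, mul_assoc _ r k⟩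
    have hsub : {y | ∃ r ∈ rSet K b, y = (b * k₀ * b) * r} ⊆ rSet K b := by
      rintro y ⟨r, hr, rfl⟩
      exact hRbmin.1.2.2 _ haR r (hRbmin.1.2.1 hr)
    have := hRbmin.2 _ hA' hsub
    rw [← this] at hx
    exact hx
  -- x ∈ Lb implies x ∈ Lb • a
  have haGL : ∀ x ∈ lSet K b, ∃ l ∈ lSet K b, x = l * (b * k₀ * b) := by
    intro x hx
    have hA' : IsLeftIdealIn K {y | ∃ l ∈ lSet K b, y = l * (b * k₀ * b)} := by
      refine ⟨⟨b * (b * k₀ * b), b, hbLb, rfl⟩, ?_, ?_⟩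
      · rintro y ⟨l, hl, rfl⟩
        exact hmul _ (hLbmin.1.2.1 hl) _ (hLbmin.1.2.1 haL)
      · rintro y ⟨l, hl, rfl⟩ k hk
        exact ⟨k * l, hLbmin.1.2.2 l hl k hk, (mul_assoc k l _).symm⟩
    have hsub : {y | ∃ l ∈ lSet K b, y = l * (b * k₀ * b)} ⊆ lSet K b := by
      rintro y ⟨l, hl, rfl⟩
      exact hLbmin.1.2.2 _ haL l (hLbmin.1.2.1 hl)
    have := hLbmin.2 _ hA' hsub
    rw [← this] at hx
    exact hx
  -- b = a * (b*k₁) and b = (k₂*b) * a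
  obtain ⟨r₁, hr₁, hbr⟩ := haG b hbRb
  obtain ⟨k₁, hk₁, rfl⟩ := hr₁
  obtain ⟨l₁, hl₁, hbl⟩ := haGL b hbLb
  obtain ⟨k₂, hk₂, rfl⟩ := hl₁
  -- idempotent-like element e := b*(k₁*k₀)*b with a = a*e
  have hae : (b * k₀ * b) = (b * k₀ * b) * (b * (k₁ * k₀) * b) := by
    have h1 : (b * k₀ * b) * (b * (k₁ * k₀) * b)
        = ((b * k₀ * b) * (b * k₁)) * (k₀ * b) := by
      simp [mul_assoc]
    rw [h1, ← hbr, ← mul_assoc]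
  -- (c * b) * e = c * b for every c
  have hge : ∀ c : S, (c * b) * (b * (k₁ * k₀) * b) = c * b := by
    intro c
    calc (c * b) * (b * (k₁ * k₀) * b)
        = (c * ((k₂ * b) * (b * k₀ * b))) * (b * (k₁ * k₀) * b) := by rw [← hbl]
      _ = c * ((k₂ * b) * ((b * k₀ * b) * (b * (k₁ * k₀) * b))) := by
          simp [mul_assoc]
      _ = c * ((k₂ * b) * (b * k₀ * b)) := by rw [← hae]
      _ = c * b := by rw [← hbl]
  have hee : (b * (k₁ * k₀) * b) * (b * (k₁ * k₀) * b) = (b * (k₁ * k₀) * b) :=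
    hge (b * (k₁ * k₀))
  -- e ∈ Rb, so rSet K e = Rb and b ∈ rSet K e
  have heK : b * (k₁ * k₀) * b ∈ K :=
    hmul _ (hmul _ hb _ (hmul _ hk₁ _ hk₀)) _ hb
  have heRb : b * (k₁ * k₀) * b ∈ rSet K b :=
    ⟨(k₁ * k₀) * b, hmul _ (hmul _ hk₁ _ hk₀) _ hb, mul_assoc _ _ _⟩
  have hsub2 : rSet K (b * (k₁ * k₀) * b) ⊆ rSet K b := by
    rintro x ⟨k, hk, rfl⟩
    exact hRbmin.1.2.2 _ heRb k hk
  have heq2 : rSet K (b * (k₁ * k₀) * b) = rSet K b :=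
    hRbmin.2 _ (rSet_isRightIdeal hCS.1 hmul heK) hsub2
  have hbe : b ∈ rSet K (b * (k₁ * k₀) * b) := by rw [heq2]; exact hbRb
  obtain ⟨k₅, hk₅, hbk₅⟩ := hbe
  -- e * b = b
  have heb : (b * (k₁ * k₀) * b) * b = b := by
    have h6 : (b * (k₁ * k₀) * b) * b
        = (b * (k₁ * k₀) * b) * (b * (k₁ * k₀) * b * k₅) := by rw [← hbk₅]
    rw [h6, ← mul_assoc, hee, ← hbk₅]
  refine ⟨(k₁ * k₀) * b, hmul _ (hmul _ hk₁ _ hk₀) _ hb, ?_⟩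
  rw [← mul_assoc b (k₁ * k₀) b]
  exact heb.symm

/-- Key fact: if `a, b` lie in the completely simple kernel and `a = b*s`,
then `b = a * (s * x * b)` for some `x`. -/
theorem kernel_pair {K : Set S} (hK : IsKernel K) (hCS : IsCompletelySimple K)
    {a b : S} (ha : a ∈ K) (hb : b ∈ K) (s : S) (hab : a = b * s) :
    ∃ x : S, b = a * (s * x * b) := by
  have hc : a * s ∈ K := hK.1.1.2 a ha s
  have h1 : a ∈ rSet K b := mem_rSet_of hK hCS ha hb hab
  have h2 : rSet K a = rSet K b := rSet_eq hCS hb ha h1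
  have h3 : a * s ∈ rSet K a := mem_rSet_of hK hCS hc ha rfl
  have h4 : rSet K (a * s) = rSet K a := rSet_eq hCS ha hc h3
  have hbmem : b ∈ rSet K (a * s) := by
    rw [h4, h2]; exact (rSet_minRight hCS hb).2
  obtain ⟨k₂, hk₂, hbk⟩ := hbmem
  obtain ⟨z, hz, hreg⟩ := regular_of_mem hCS hb
  refine ⟨k₂ * z, ?_⟩
  have h5 : a * (s * (k₂ * z) * b) = (a * s * k₂) * z * b := by
    simp [mul_assoc]
  rw [h5, ← hbk]
  exact hreg

end BiIdealRHeightAux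

/-- If `S` has finite `R`-height and completely simple kernel, and `B`
is a bi-ideal of `S`, then `H_R(B) ≤ 3·H_R(S) - 2`. -/
theorem biideal_rheight_le_three_mul_sub_two {S : Type*} [Semigroup S]
    (hfin : RHeight (Set.univ : Set S) ≠ ⊤)
    {K : Set S} (hK : IsKernel K) (hCS : IsCompletelySimple K)
    {B : Set S} (hB : IsBiIdeal B) :
    RHeight B ≤ 3 * RHeight (Set.univ : Set S) - 2 := by
  classical
  obtain ⟨h, hh⟩ : ∃ h : ℕ, RHeight (Set.univ : Set S) = (h : ℕ∞) := by
    obtain ⟨h, hh⟩ := WithTop.ne_top_iff_exists.mp hfin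
    exact ⟨h, hh.symm⟩
  have hle_h : ∀ m : ℕ, HasRChain (Set.univ : Set S) Set.univ m → m ≤ h := by
    intro m hm
    have h1 : (m : ℕ∞) ≤ RHeight (Set.univ : Set S) := le_sSup ⟨m, hm, rfl⟩
    rw [hh] at h1
    exact_mod_cast h1
  apply sSup_le
  rintro x ⟨n, hn, rfl⟩
  rcases Nat.eq_zero_or_pos n with rfl | hn1
  · simp
  obtain ⟨f, hfB, hchain⟩ := hn
  have hidx : ∀ m : ℕ, min m (n - 1) < n := fun m => by omega
  set F : ℕ → S := fun m => f ⟨min m (n - 1), hidx m⟩ with hF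
  have hFB : ∀ m, F m ∈ B := fun m => hfB _
  have hmulf : ∀ i j : Fin n, (i : ℕ) < (j : ℕ) → ∃ s ∈ B, f i = f j * s := by
    intro i j hij
    obtain ⟨hle, hnle⟩ := hchain i j hij
    rcases hle with heq | hex
    · exact absurd (Or.inl heq.symm) hnle
    · exact hex
  have hmulF : ∀ a b : ℕ, a < b → b ≤ n - 1 → ∃ s ∈ B, F a = F b * s := by
    intro a b hab hb
    exact hmulf ⟨min a (n - 1), hidx a⟩ ⟨min b (n - 1), hidx b⟩
      (show min a (n - 1) < min b (n - 1) by omega)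
  have hRleF : ∀ a b : ℕ, a ≤ b → b ≤ n - 1 →
      RLe (Set.univ : Set S) (F a) (F b) := by
    intro a b hab hb
    rcases eq_or_lt_of_le hab with rfl | hlt
    · exact Or.inl rfl
    · obtain ⟨s, -, e⟩ := hmulF a b hlt hb
      exact Or.inr ⟨s, trivial, e⟩
  -- indices at distance ≥ 3 lie in different R_S-classes
  have hstep1 : ∀ a b : ℕ, a + 3 ≤ b → b ≤ n - 1 →
      ¬ RLe (Set.univ : Set S) (F b) (F a) := by
    intro a b hab hb hcon
    obtain ⟨s₁, hs₁, e₁⟩ := hmulF a (a + 1) (by omega) (by omega)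
    obtain ⟨s₃, hs₃, e₃⟩ := hmulF (a + 2) b (by omega) hb
    have hlt12 : (⟨min (a + 1) (n - 1), hidx _⟩ : Fin n)
        < ⟨min (a + 2) (n - 1), hidx _⟩ := by
      show min (a + 1) (n - 1) < min (a + 2) (n - 1); omega
    have key : RLe B (F (a + 2)) (F (a + 1)) := by
      rcases hcon with heq | ⟨u, -, hu⟩
      · refine Or.inr ⟨s₁ * s₃, (hB.2 s₁ hs₁ s₃ hs₃).1, ?_⟩
        rw [e₃, heq, e₁, mul_assoc]
      · refine Or.inr ⟨s₁ * u * s₃, (hB.2 s₁ hs₁ s₃ hs₃).2 u, ?_⟩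
        rw [e₃, hu, e₁]
        simp [mul_assoc]
    exact (hchain _ _ hlt12).2 key
  have hKdownF : ∀ a b : ℕ, a < b → b ≤ n - 1 → F b ∈ K → F a ∈ K := by
    intro a b hab hb hbK
    obtain ⟨s, -, e⟩ := hmulF a b hab hb
    rw [e]; exact hK.1.1.2 _ hbK s
  have hKoneF : ∀ a b : ℕ, a < b → b ≤ n - 1 → F a ∈ K → F b ∈ K → False := by
    intro a b hab hb haK hbK
    obtain ⟨s, hs, e⟩ := hmulF a b hab hb
    obtain ⟨x, hx⟩ := BiIdealRHeightAux.kernel_pair hK hCS haK hbK s e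
    have hlt : (⟨min a (n - 1), hidx a⟩ : Fin n) < ⟨min b (n - 1), hidx b⟩ := by
      show min a (n - 1) < min b (n - 1); omega
    exact (hchain _ _ hlt).2
      (Or.inr ⟨s * x * F b, (hB.2 s hs (F b) (hFB b)).2 x, hx⟩)
  have h1h : 1 ≤ h := by
    refine hle_h 1 ⟨fun _ => F 0, fun _ => trivial, ?_⟩
    intro i j hij
    exact absurd hij (by omega)
  suffices hmain : n + 2 ≤ 3 * h by
    rw [hh]
    have hcast : 3 * (h : ℕ∞) - 2 = ((3 * h - 2 : ℕ) : ℕ∞) := by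
      rw [ENat.coe_sub]; push_cast; rfl
    rw [hcast]
    show (n : ℕ∞) ≤ ((3 * h - 2 : ℕ) : ℕ∞)
    exact_mod_cast (by omega : n ≤ 3 * h - 2)
  by_cases hf0K : F 0 ∈ K
  · -- the bottom of the chain lies in the kernel
    rcases Nat.lt_or_ge n 2 with hn2 | hn2
    · omega
    · set q := (n - 2) / 3 + 1 with hq
      have hchainU : HasRChain (Set.univ : Set S) Set.univ (q + 1) := by
        refine ⟨fun t => if (t : ℕ) = 0 then F 0 else F (1 + 3 * ((t : ℕ) - 1)),
          fun _ => trivial, ?_⟩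
        intro t t' htt'
        have ht'lt : (t' : ℕ) < q + 1 := t'.isLt
        have hvv : (t : ℕ) < (t' : ℕ) := htt'
        have ht'0 : ¬ ((t' : ℕ) = 0) := by omega
        have hb' : 1 + 3 * ((t' : ℕ) - 1) ≤ n - 1 := by omega
        show RLt (Set.univ : Set S)
          (if (t : ℕ) = 0 then F 0 else F (1 + 3 * ((t : ℕ) - 1)))
          (if (t' : ℕ) = 0 then F 0 else F (1 + 3 * ((t' : ℕ) - 1)))
        rw [if_neg ht'0]
        by_cases ht0 : (t : ℕ) = 0
        · rw [if_pos ht0]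
          constructor
          · exact hRleF 0 _ (by omega) hb'
          · intro hcon
            have hmem : F (1 + 3 * ((t' : ℕ) - 1)) ∈ K := by
              rcases hcon with heq | ⟨u, -, hu⟩
              · rw [heq]; exact hf0K
              · rw [hu]; exact hK.1.1.2 _ hf0K u
            exact hKoneF 0 _ (by omega) hb' hf0K hmem
        · rw [if_neg ht0]
          constructor
          · exact hRleF _ _ (by omega) hb'
          · exact hstep1 _ _ (by omega) hb'
      have hq1 : q + 1 ≤ h := hle_h _ hchainU
      omega
  · -- the chain avoids the kernel; prepend a kernel element below it
    obtain ⟨k₀, hk₀⟩ := hCS.1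
    set q := (n - 1) / 3 + 1 with hq
    have hchainU : HasRChain (Set.univ : Set S) Set.univ (q + 1) := by
      refine ⟨fun t => if (t : ℕ) = 0 then F 0 * k₀ else F (3 * ((t : ℕ) - 1)),
        fun _ => trivial, ?_⟩
      intro t t' htt'
      have ht'lt : (t' : ℕ) < q + 1 := t'.isLt
      have hvv : (t : ℕ) < (t' : ℕ) := htt'
      have ht'0 : ¬ ((t' : ℕ) = 0) := by omega
      have hb' : 3 * ((t' : ℕ) - 1) ≤ n - 1 := by omega
      have hKk : F 0 * k₀ ∈ K := hK.1.2.2 k₀ hk₀ (F 0)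
      show RLt (Set.univ : Set S)
        (if (t : ℕ) = 0 then F 0 * k₀ else F (3 * ((t : ℕ) - 1)))
        (if (t' : ℕ) = 0 then F 0 * k₀ else F (3 * ((t' : ℕ) - 1)))
      rw [if_neg ht'0]
      by_cases ht0 : (t : ℕ) = 0
      · rw [if_pos ht0]
        constructor
        · exact BiIdealRHeightAux.RLe_univ_trans
            (Or.inr ⟨k₀, trivial, rfl⟩) (hRleF 0 _ (by omega) hb')
        · intro hcon
          have hmem : F (3 * ((t' : ℕ) - 1)) ∈ K := by
            rcases hcon with heq | ⟨u, -, hu⟩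
            · rw [heq]; exact hKk
            · rw [hu]; exact hK.1.1.2 _ hKk u
          rcases Nat.eq_zero_or_pos (3 * ((t' : ℕ) - 1)) with hz | hp
          · rw [hz] at hmem; exact hf0K hmem
          · exact hf0K (hKdownF 0 _ hp hb' hmem)
      · rw [if_neg ht0]
        constructor
        · exact hRleF _ _ (by omega) hb'
        · exact hstep1 _ _ (by omega) hb'
    have hq1 : q + 1 ≤ h := hle_h _ hchainU
    omega
end

section
/- Let S be a semigroup with finite R-height, and let B be a bi-ideal of S in which every element has a local right identity in B. Then H_R(B) = n, where n is the maximum length of a chain of R-classes of S that intersect B. -/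
/-!
Common definitions: Green's preorder/relation computed inside a subsemigroup,
chains of R-classes, R-height, bi-ideals, one- and two-sided ideals,
the kernel, and completely simple (sub)semigroups.
-/

variable {S : Type*}

/-!
Local right identities let one rewrite `a = b * s` as `a = b * (v * s * u)` with `u, v ∈ B`, and
`v * s * u ∈ B` since `B` is a bi-ideal. So on `B` Green's preorder of `B` agrees with that of `S`,
and chains of `R_B`-classes of `B` are exactly chains of `R_S`-classes met by `B`.
-/

section Green

variable [Semigroup S]

theorem RLe.mono {B C : Set S} (hBC : B ⊆ C) {a b : S} (h : RLe B a b) : RLe C a b :=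
  h.imp_right fun ⟨s, hs, hab⟩ => ⟨s, hBC hs, hab⟩

theorem RLe.of_univ_of_isBiIdeal {B : Set S} (hB : IsBiIdeal B) {a b : S}
    (ha : ∃ u ∈ B, a = a * u) (hb : ∃ v ∈ B, b = b * v) (h : RLe Set.univ a b) :
    RLe B a b := by
  obtain rfl | ⟨s, -, rfl⟩ := h
  · exact Or.inl rfl
  obtain ⟨u, hu, hau⟩ := ha
  obtain ⟨v, hv, hbv⟩ := hb
  refine Or.inr ⟨v * s * u, (hB.2 v hv u hu).2 s, ?_⟩
  calc b * s = b * v * s * u := by rw [← hbv, ← hau]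
    _ = b * (v * s * u) := by simp only [mul_assoc]

theorem rLe_iff_of_isBiIdeal {B : Set S} (hB : IsBiIdeal B)
    (hlri : ∀ b ∈ B, ∃ u ∈ B, b = b * u) {a b : S} (ha : a ∈ B) (hb : b ∈ B) :
    RLe B a b ↔ RLe Set.univ a b :=
  ⟨RLe.mono (Set.subset_univ B), RLe.of_univ_of_isBiIdeal hB (hlri a ha) (hlri b hb)⟩

theorem hasRChain_congr {B B' C : Set S}
    (hBB' : ∀ a ∈ C, ∀ b ∈ C, RLe B a b ↔ RLe B' a b) (m : ℕ) :
    HasRChain B C m ↔ HasRChain B' C m := by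
  have hlt : ∀ a ∈ C, ∀ b ∈ C, RLt B a b ↔ RLt B' a b := fun a ha b hb => by
    rw [RLt, RLt, hBB' a ha b hb, hBB' b hb a ha]
  exact exists_congr fun f => and_congr_right fun hf =>
    forall₂_congr fun i j => imp_congr_right fun _ => hlt _ (hf i) _ (hf j)

theorem rHeight_eq_of_isGreatest {B : Set S} {n : ℕ}
    (hn : IsGreatest {m : ℕ | HasRChain B B m} n) : RHeight B = n := by
  refine le_antisymm (sSup_le ?_) (le_sSup ⟨n, hn.1, rfl⟩)
  rintro _ ⟨m, hm, rfl⟩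
  exact Nat.cast_le.mpr (hn.2 hm)

end Green

theorem biideal_local_right_identities_rheight_eq_general {S : Type*} [Semigroup S]
    {B : Set S} (hB : IsBiIdeal B) (hlri : ∀ b ∈ B, ∃ u ∈ B, b = b * u)
    (n : ℕ)
    (hchain : HasRChain (Set.univ : Set S) B n)
    (hmax : ∀ m : ℕ, HasRChain (Set.univ : Set S) B m → m ≤ n) :
    RHeight B = (n : ℕ∞) := by
  have hchains : ∀ m, HasRChain B B m ↔ HasRChain Set.univ B m :=
    hasRChain_congr fun a ha b hb => rLe_iff_of_isBiIdeal hB hlri ha hb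
  exact rHeight_eq_of_isGreatest ⟨(hchains n).2 hchain, fun m hm => hmax m ((hchains m).1 hm)⟩

/-- If `S` has finite `R`-height and `B` is a bi-ideal of `S` in which
every element has a local right identity in `B`, then `H_R(B) = n`, where `n` is the
maximum length of a chain of `R_S`-classes that intersect `B`. -/
theorem biideal_local_right_identities_rheight_eq {S : Type*} [Semigroup S]
    (hfin : RHeight (Set.univ : Set S) ≠ ⊤)
    {B : Set S} (hB : IsBiIdeal B) (hlri : ∀ b ∈ B, ∃ u ∈ B, b = b * u)
    (n : ℕ)
    (hchain : HasRChain (Set.univ : Set S) B n)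
    (hmax : ∀ m : ℕ, HasRChain (Set.univ : Set S) B m → m ≤ n) :
    RHeight B = (n : ℕ∞) :=
  biideal_local_right_identities_rheight_eq_general hB hlri n hchain hmax
end

section
/- Let S be a semigroup with finite R-height and let A be a left ideal of S. Then H_R(A) ≤ 2n, where n is the maximum length of a chain of R-classes of S that intersect A. -/
/-!
Common definitions: Green's preorder/relation computed inside a subsemigroup,
chains of R-classes, R-height, bi-ideals, one- and two-sided ideals,
the kernel, and completely simple (sub)semigroups.
-/

variable {S : Type*}

/-- If `S` has finite `R`-height and `A` is a left ideal of `S`,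
then `H_R(A) ≤ 2n`, where `n` is the maximum length of a chain of `R_S`-classes
that intersect `A`. -/
theorem leftideal_rheight_le {S : Type*} [Semigroup S]
    (hfin : RHeight (Set.univ : Set S) ≠ ⊤)
    {A : Set S} (hA : IsLeftIdeal A) (n : ℕ)
    (hchain : HasRChain (Set.univ : Set S) A n)
    (hmax : ∀ m : ℕ, HasRChain (Set.univ : Set S) A m → m ≤ n) :
    RHeight A ≤ ((2 * n : ℕ) : ℕ∞) := by
  apply sSup_le
  rintro x ⟨m, hm, rfl⟩
  rw [Nat.cast_le]
  obtain ⟨f, hfA, hflt⟩ := hm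
  -- every RLe A is an RLe univ
  have hle : ∀ a b : S, RLe A a b → RLe (Set.univ : Set S) a b := by
    rintro a b (rfl | ⟨s, _, rfl⟩)
    · exact Or.inl rfl
    · exact Or.inr ⟨s, trivial, rfl⟩
  -- key: for p < q < r, ¬ RLe univ (f r) (f p)
  have key : ∀ p q r : Fin m, p < q → q < r → ¬ RLe (Set.univ : Set S) (f r) (f p) := by
    intro p q r hpq hqr hc
    have h1 := hflt p q hpq
    have h2 := hflt q r hqr
    -- f r ≠ f p since ¬ RLe A (f r) (f p)
    have h3 := hflt p r (lt_trans hpq hqr)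
    rcases hc with heq | ⟨v, _, hv⟩
    · exact h3.2 (Or.inl heq)
    · -- f r = f p * v; f q = f r * s with s ∈ A
      rcases h2.1 with heq | ⟨s, hs, hsq⟩
      · exact h2.2 (Or.inl heq.symm)
      · -- f q = f p * v * s = f p * (v * s), v * s ∈ A
        apply h1.2
        exact Or.inr ⟨v * s, hA.2 s hs v, by rw [hsq, hv, mul_assoc]⟩
  -- extract a strict univ-chain of length (m+1)/2 from even indices
  set k := (m + 1) / 2 with hk
  have hchain2 : HasRChain (Set.univ : Set S) A k := by
    refine ⟨fun i => f ⟨2 * i.1, by omega⟩, fun i => hfA _, ?_⟩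
    intro i j hij
    have hij' : (i : ℕ) < (j : ℕ) := hij
    constructor
    · exact hle _ _ (hflt _ _ (Fin.mk_lt_mk.mpr (by omega))).1
    · exact key ⟨2 * i.1, by omega⟩ ⟨2 * i.1 + 1, by omega⟩ ⟨2 * j.1, by omega⟩
        (Fin.mk_lt_mk.mpr (by omega)) (Fin.mk_lt_mk.mpr (by omega))
  have := hmax k hchain2
  omega
end

section
/- Let S be a semigroup with finite R-height and let A be a left ideal of S. Then H_R(A) ≤ 2·H_R(S). -/
/-!
Common definitions: Green's preorder/relation computed inside a subsemigroup,
chains of R-classes, R-height, bi-ideals, one- and two-sided ideals,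
the kernel, and completely simple (sub)semigroups.
-/

variable {S : Type*}

lemma RLe_univ_of_RLe [Semigroup S] {B : Set S} {a b : S} (h : RLe B a b) :
    RLe (Set.univ : Set S) a b := by
  rcases h with h | ⟨s, _, hs⟩
  · exact Or.inl h
  · exact Or.inr ⟨s, trivial, hs⟩

lemma RLe_univ_trans [Semigroup S] {a b c : S} (h1 : RLe (Set.univ : Set S) a b)
    (h2 : RLe (Set.univ : Set S) b c) : RLe (Set.univ : Set S) a c := by
  rcases h1 with rfl | ⟨s, _, hs⟩
  · exact h2
  · rcases h2 with rfl | ⟨t, _, ht⟩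
    · exact Or.inr ⟨s, trivial, hs⟩
    · exact Or.inr ⟨t * s, trivial, by rw [hs, ht, mul_assoc]⟩

/-- Key lemma: in a left ideal `A`, one cannot have `a <_A b <_A c` with `c ≤_S a`. -/
lemma key_triple [Semigroup S] {A : Set S} (hA : IsLeftIdeal A) {a b c : S}
    (hab : RLt A a b) (hbc : RLt A b c) (hca : RLe (Set.univ : Set S) c a) : False := by
  rcases hab.1 with rfl | ⟨s, hsA, hs⟩
  · exact hab.2 (Or.inl rfl)
  rcases hbc.1 with rfl | ⟨t, htA, ht⟩
  · exact hbc.2 (Or.inl rfl)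
  rcases hca with rfl | ⟨u, _, hu⟩
  · exact hab.2 (Or.inr ⟨t, htA, ht⟩)
  · exact hab.2 (Or.inr ⟨u * t, hA.2 t htA u, by rw [ht, hu, mul_assoc]⟩)

lemma chain_halve [Semigroup S] {A : Set S} (hA : IsLeftIdeal A) {n : ℕ}
    (h : HasRChain A A n) : HasRChain (Set.univ : Set S) (Set.univ : Set S) ((n + 1) / 2) := by
  obtain ⟨f, -, hf⟩ := h
  refine ⟨fun i => f ⟨2 * i.val, by omega⟩, fun _ => trivial, fun i j hij => ?_⟩
  have hj2 : 2 * j.val < n := by omega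
  have hle : ∀ p q : ℕ, (hp : p < n) → (hq : q < n) → p ≤ q →
      RLe (Set.univ : Set S) (f ⟨p, hp⟩) (f ⟨q, hq⟩) := by
    intro p q hp hq hpq
    rcases eq_or_lt_of_le hpq with rfl | hlt
    · exact Or.inl rfl
    · exact RLe_univ_of_RLe (hf ⟨p, hp⟩ ⟨q, hq⟩ hlt).1
  constructor
  · exact hle _ _ (by omega) (by omega) (by simpa using Nat.mul_le_mul_left 2 hij.le)
  · intro hcon
    have h1 : 2 * i.val < 2 * i.val + 1 := by omega
    have hb1 : 2 * i.val + 1 < n := by omega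
    have hb2 : 2 * i.val + 2 < n := by omega
    refine key_triple hA (a := f ⟨2 * i.val, by omega⟩) (b := f ⟨2 * i.val + 1, hb1⟩)
      (c := f ⟨2 * i.val + 2, hb2⟩) ?_ ?_ ?_
    · exact hf _ _ (by simp [Fin.lt_def])
    · exact hf _ _ (by simp [Fin.lt_def])
    · exact RLe_univ_trans (hle _ _ hb2 hj2 (by omega)) hcon

/-- If `S` has finite `R`-height and `A` is a left ideal of `S`,
then `H_R(A) ≤ 2·H_R(S)`. -/
theorem leftideal_rheight_le_two_mul {S : Type*} [Semigroup S]
    (hfin : RHeight (Set.univ : Set S) ≠ ⊤)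
    {A : Set S} (hA : IsLeftIdeal A) :
    RHeight A ≤ 2 * RHeight (Set.univ : Set S) := by
  apply sSup_le
  rintro x ⟨n, hn, rfl⟩
  have hm : ((((n + 1) / 2 : ℕ)) : ℕ∞) ≤ RHeight (Set.univ : Set S) :=
    le_sSup ⟨(n + 1) / 2, chain_halve hA hn, rfl⟩
  calc (n : ℕ∞) ≤ ((2 * ((n + 1) / 2) : ℕ) : ℕ∞) := by
        exact Nat.cast_le.mpr (by omega)
    _ = 2 * (((n + 1) / 2 : ℕ) : ℕ∞) := by push_cast; ring
    _ ≤ 2 * RHeight (Set.univ : Set S) := mul_le_mul_right hm 2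
end
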